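/- (A_n sequence / pure gravity, AE_d.) Let d ≥ 4 be an integer. On ℝ^d (no dilatons) consider the d wall forms w_i = e_{i+1} − e_i for 1 ≤ i ≤ d−1 (symmetry walls) and w_d = 2e₁ + Σ_{i=2}^{d−2} e_i (gravitational wall). Then (w_i|w_i) = 2 for every i, and the Cartan matrix A_{ij} = 2(w_i|w_j)/(w_i|w_i) is given by: A_{ii} = 2; A_{i,i+1} = A_{i+1,i} = −1 for 1 ≤ i ≤ d−2; A_{1,d} = A_{d,1} = −1; A_{d−2,d} = A_{d,d−2} = −1; and all other entries are 0. In particular A is a symmetric generalized Cartan matrix (diagonal entries 2, off-diagonal entries nonpositive integers, A_{ij} = 0 iff A_{ji} = 0): the generalized Cartan matrix of the overextension A_{d−2}^∧∧ = AE_d. -/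
import Mathlib


/-- The wall scalar product on `ℝ^d` (no dilatons):
`(w|w') = Σᵢ wᵢw'ᵢ − (1/(d−1)) (Σᵢ wᵢ)(Σᵢ w'ᵢ)`. -/
noncomputable def wallIP (d : ℕ) (w w' : Fin d → ℝ) : ℝ :=
  (∑ i, w i * w' i) - (1 / ((d : ℝ) - 1)) * (∑ i, w i) * (∑ i, w' i)

lemma sum_if_val (d a : ℕ) (ha : a < d) (f : Fin d → ℝ) :
    ∑ l : Fin d, (if l.val = a then f l else 0) = f ⟨a, ha⟩ := by
  rw [show (fun l : Fin d => if l.val = a then f l else 0)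
      = fun l => if l = ⟨a, ha⟩ then f l else 0 from by
    funext l; simp [Fin.ext_iff]]
  simp [Finset.sum_ite_eq']

lemma wallIP_comm (d : ℕ) (w w' : Fin d → ℝ) :
    wallIP d w w' = wallIP d w' w := by
  unfold wallIP
  rw [show ∑ i, w i * w' i = ∑ i, w' i * w i from by simp [mul_comm]]
  ring

lemma ip_sym (d m : ℕ) (hm : m + 1 < d) (w' : Fin d → ℝ) :
    wallIP d (fun l => (if l.val = m + 1 then (1 : ℝ) else 0)
      - (if l.val = m then 1 else 0)) w'
    = w' ⟨m + 1, hm⟩ - w' ⟨m, Nat.lt_of_succ_lt hm⟩ := by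
  unfold wallIP
  have h1 : ∑ l : Fin d, ((if l.val = m + 1 then (1:ℝ) else 0)
      - (if l.val = m then 1 else 0)) * w' l
      = w' ⟨m + 1, hm⟩ - w' ⟨m, Nat.lt_of_succ_lt hm⟩ := by
    simp only [sub_mul, ite_mul, one_mul, zero_mul, Finset.sum_sub_distrib]
    rw [sum_if_val d (m+1) hm, sum_if_val d m (Nat.lt_of_succ_lt hm)]
  have h2 : ∑ l : Fin d, ((if l.val = m + 1 then (1:ℝ) else 0)
      - (if l.val = m then 1 else 0)) = 0 := by
    rw [Finset.sum_sub_distrib,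
      sum_if_val d (m+1) hm (fun _ => 1), sum_if_val d m (Nat.lt_of_succ_lt hm) (fun _ => 1)]
    ring
  rw [h1, h2]; ring

lemma sum_mid (d : ℕ) (hd : 4 ≤ d) :
    ∑ l : Fin d, (if 1 ≤ l.val ∧ l.val ≤ d - 3 then (1:ℝ) else 0) = (d : ℝ) - 3 := by
  rw [Fin.sum_univ_eq_sum_range (fun i => if 1 ≤ i ∧ i ≤ d - 3 then (1:ℝ) else 0)]
  rw [Finset.sum_boole]
  rw [show (Finset.range d).filter (fun i => 1 ≤ i ∧ i ≤ d - 3) = Finset.Icc 1 (d-3) from by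
    ext x; simp [Finset.mem_range, Finset.mem_Icc]; omega]
  rw [Nat.card_Icc]
  have : d - 3 + 1 - 1 = d - 3 := by omega
  rw [this, Nat.cast_sub (by omega)]
  norm_num

lemma ip_grav (d : ℕ) (hd : 4 ≤ d) :
    wallIP d (fun l => if l.val = 0 then (2:ℝ) else if 1 ≤ l.val ∧ l.val ≤ d - 3 then 1 else 0)
      (fun l => if l.val = 0 then 2 else if 1 ≤ l.val ∧ l.val ≤ d - 3 then 1 else 0) = 2 := by
  have hsplit : ∀ l : Fin d,
      (if l.val = 0 then (2:ℝ) else if 1 ≤ l.val ∧ l.val ≤ d - 3 then 1 else 0)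
      = (if l.val = 0 then 2 else 0) + (if 1 ≤ l.val ∧ l.val ≤ d - 3 then 1 else 0) := by
    intro l; split_ifs <;> first | (exfalso; first | assumption | omega) | norm_num
  have hsum : ∑ l : Fin d, (if l.val = 0 then (2:ℝ) else if 1 ≤ l.val ∧ l.val ≤ d - 3 then 1 else 0)
      = (d : ℝ) - 1 := by
    simp only [hsplit]
    rw [Finset.sum_add_distrib, sum_if_val d 0 (by omega) (fun _ => 2), sum_mid d hd]
    ring
  have hsq : ∀ l : Fin d,
      (if l.val = 0 then (2:ℝ) else if 1 ≤ l.val ∧ l.val ≤ d - 3 then 1 else 0)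
      * (if l.val = 0 then (2:ℝ) else if 1 ≤ l.val ∧ l.val ≤ d - 3 then 1 else 0)
      = (if l.val = 0 then 4 else 0) + (if 1 ≤ l.val ∧ l.val ≤ d - 3 then 1 else 0) := by
    intro l; split_ifs <;> first | (exfalso; first | assumption | omega) | norm_num
  have hsumsq : ∑ l : Fin d,
      ((if l.val = 0 then (2:ℝ) else if 1 ≤ l.val ∧ l.val ≤ d - 3 then 1 else 0)
      * (if l.val = 0 then (2:ℝ) else if 1 ≤ l.val ∧ l.val ≤ d - 3 then 1 else 0))
      = (d : ℝ) + 1 := by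
    simp only [hsq]
    rw [Finset.sum_add_distrib, sum_if_val d 0 (by omega) (fun _ => 4), sum_mid d hd]
    ring
  unfold wallIP
  rw [hsumsq, hsum]
  have hne : (d : ℝ) - 1 ≠ 0 := by
    have : (4:ℝ) ≤ d := by exact_mod_cast hd
    linarith
  field_simp
  ring

set_option maxHeartbeats 2000000 in
/-- (Aₙ sequence / pure gravity, AE_d.) For `d ≥ 4`, the `d` wall forms of pure gravity
(0-based index `m`): symmetry walls `w_m = e_{m+2} − e_{m+1}` for `m < d−1` and the
gravitational wall `w_{d−1} = 2e₁ + Σ_{i=2}^{d−2} e_i`, all have squared norm `2`,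
and their Cartan matrix `A_{ij} = 2(w_i|w_j)/(w_i|w_i)` is: `2` on the diagonal, `−1`
between consecutive symmetry walls, `−1` between the gravitational wall and the first
and the `(d−2)`-nd symmetry wall (0-based: indices `0` and `d−3`), `0` elsewhere.
In particular `A` is a symmetric generalized Cartan matrix: the generalized Cartan
matrix of the overextension `A_{d−2}^∧∧ = AE_d`. -/
theorem pure_gravity_billiard_AEd (d : ℕ) (hd : 4 ≤ d)
    (w : Fin d → Fin d → ℝ)
    (hw : ∀ m : Fin d, w m =
      if m.val < d - 1 then
        fun l => (if l.val = m.val + 1 then (1 : ℝ) else 0)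
          - (if l.val = m.val then 1 else 0)
      else
        fun l => if l.val = 0 then 2 else if 1 ≤ l.val ∧ l.val ≤ d - 3 then 1 else 0)
    (A : Fin d → Fin d → ℝ)
    (hA : ∀ i j, A i j = 2 * wallIP d (w i) (w j) / wallIP d (w i) (w i)) :
    (∀ i, wallIP d (w i) (w i) = 2) ∧
    (∀ i j : Fin d, A i j =
      if i = j then 2
      else if (i.val + 1 = j.val ∧ j.val ≤ d - 2) ∨ (j.val + 1 = i.val ∧ i.val ≤ d - 2)
        then -1
      else if (i.val = 0 ∧ j.val = d - 1) ∨ (j.val = 0 ∧ i.val = d - 1) then -1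
      else if (i.val = d - 3 ∧ j.val = d - 1) ∨ (j.val = d - 3 ∧ i.val = d - 1) then -1
      else 0) ∧
    (∀ i j, A i j = A j i) ∧
    (∀ i, A i i = 2) ∧
    (∀ i j, i ≠ j → A i j ≤ 0 ∧ ∃ k : ℤ, A i j = (k : ℝ)) ∧
    (∀ i j, A i j = 0 ↔ A j i = 0) := by
  have htab : ∀ i j : Fin d, wallIP d (w i) (w j) =
      if i = j then 2
      else if (i.val + 1 = j.val ∧ j.val ≤ d - 2) ∨ (j.val + 1 = i.val ∧ i.val ≤ d - 2)
        then -1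
      else if (i.val = 0 ∧ j.val = d - 1) ∨ (j.val = 0 ∧ i.val = d - 1) then -1
      else if (i.val = d - 3 ∧ j.val = d - 1) ∨ (j.val = d - 3 ∧ i.val = d - 1) then -1
      else 0 := by
    intro i j
    have hi' := i.isLt
    have hj' := j.isLt
    simp only [Fin.ext_iff]
    by_cases hi : i.val < d - 1
    · rw [hw i, if_pos hi, ip_sym d i.val (by omega) (w j), hw j]
      by_cases hj : j.val < d - 1
      · rw [if_pos hj]
        simp only []
        split_ifs <;> first | (exfalso; first | assumption | omega) | norm_num
      · rw [if_neg hj]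
        simp only []
        split_ifs <;> first | (exfalso; first | assumption | omega) | norm_num
    · by_cases hj : j.val < d - 1
      · rw [wallIP_comm, hw j, if_pos hj, ip_sym d j.val (by omega) (w i), hw i, if_neg hi]
        simp only []
        split_ifs <;> first | (exfalso; first | assumption | omega) | norm_num
      · rw [hw i, if_neg hi, hw j, if_neg hj, ip_grav d hd]
        have : i.val = j.val := by omega
        split_ifs <;> first | (exfalso; first | assumption | omega) | norm_num
  have hnorm : ∀ i, wallIP d (w i) (w i) = 2 := by
    intro i; rw [htab i i, if_pos rfl]
  have hA' : ∀ i j, A i j = wallIP d (w i) (w j) := by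
    intro i j; rw [hA, hnorm]; ring
  refine ⟨hnorm, fun i j => by rw [hA', htab], fun i j => by
      rw [hA', hA', wallIP_comm], fun i => by rw [hA', hnorm], ?_, fun i j => by
      rw [hA', hA', wallIP_comm]⟩
  intro i j hij
  rw [hA', htab, if_neg hij]
  split_ifs
  · exact ⟨by norm_num, ⟨-1, by norm_num⟩⟩
  · exact ⟨by norm_num, ⟨-1, by norm_num⟩⟩
  · exact ⟨by norm_num, ⟨-1, by norm_num⟩⟩
  · exact ⟨le_refl 0, ⟨0, by norm_num⟩⟩
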